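/- Bound on keys compatible with both the observed transcript and a forged message-tag pair: let M be a finite type, B = Fin b_H → ZMod 2, and F a nonempty finite ε-ASU₂ family of functions M → B, i.e., for all m₁ ≠ m₂ and all b₁, b₂ ∈ B, |{f ∈ F : f(m₁) = b₁ ∧ f(m₂) = b₂}| ≤ ε·|F|/2^{b_H}. Fix n ≥ 1, messages m₁, …, m_n ∈ M, tags t₁, …, t_n ∈ B, a forged message m_E ≠ m₁ and a candidate forged tag t ∈ B. Then the number of keys (f, k₁, …, k_n) ∈ F × Bⁿ satisfying t = f(m_E) + k₁ and t_i = f(m_i) + k_i for all i = 1, …, n is at most ε·|F|. -/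

import Mathlib

open Finset

section KeyCounting

variable {M B : Type*} [AddGroup B] [Fintype B] [DecidableEq B]

/-- An ε-ASU₂ family is ε-almost-XOR-universal: fibre the difference over the value of `f m₂`. -/
theorem card_filter_sub_eq_le (F : Finset (M → B)) (m₁ m₂ : M) (c : B) (δ : ℝ)
    (hpair : ∀ b₁ b₂ : B, (#(F.filter fun f => f m₁ = b₁ ∧ f m₂ = b₂) : ℝ) ≤ δ) :
    (#(F.filter fun f => f m₁ - f m₂ = c) : ℝ) ≤ Fintype.card B * δ := by
  have hfibre : ∀ b : B, ((F.filter fun f => f m₁ - f m₂ = c).filter fun f => f m₂ = b) =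
      F.filter fun f => f m₁ = c + b ∧ f m₂ = b := by
    intro b
    rw [filter_filter]
    refine filter_congr fun f _ => ?_
    constructor
    · rintro ⟨hc, rfl⟩
      exact ⟨sub_eq_iff_eq_add.mp hc, rfl⟩
    · rintro ⟨hc, rfl⟩
      exact ⟨sub_eq_iff_eq_add.mpr hc, rfl⟩
  rw [card_eq_sum_card_fiberwise (f := fun f => f m₂) (t := univ) fun _ _ => mem_univ _]
  push_cast
  calc ∑ b : B, (#((F.filter fun f => f m₁ - f m₂ = c).filter fun f => f m₂ = b) : ℝ)
      ≤ ∑ _b : B, δ := sum_le_sum fun b _ => hfibre b ▸ hpair (c + b) b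
    _ = Fintype.card B * δ := by rw [sum_const, card_univ, nsmul_eq_mul]

/-- An accepted key `(f, k)` is determined by `f`, and subtracting the two tags that share the
pad `k i₀` eliminates it. -/
theorem card_forged_keys_le {ι : Type*} [Fintype ι] [DecidableEq ι] (F : Finset (M → B))
    (m : ι → M) (t' : ι → B) (i₀ : ι) (mE : M) (t : B) :
    #((F ×ˢ (univ : Finset (ι → B))).filter fun p =>
        t = p.1 mE + p.2 i₀ ∧ ∀ i, t' i = p.1 (m i) + p.2 i) ≤
      #(F.filter fun f => f mE - f (m i₀) = t - t' i₀) := by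
  refine card_le_card_of_injOn Prod.fst ?_ ?_
  · rintro ⟨f, k⟩ hp
    simp only [mem_coe, mem_filter, mem_product, mem_univ, and_true] at hp ⊢
    obtain ⟨hf, ht, htag⟩ := hp
    rw [ht, htag i₀, add_sub_add_right_eq_sub]
    exact ⟨hf, rfl⟩
  · rintro ⟨f, k⟩ hp ⟨g, l⟩ hq (rfl : f = g)
    simp only [mem_coe, mem_filter] at hp hq
    have hkl : k = l := funext fun i => add_left_cancel ((hp.2.2 i).symm.trans (hq.2.2 i))
    rw [hkl]

end KeyCounting

theorem wegman_carter_forged_keys_bound_general {M : Type*} (bH : ℕ)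
    (F : Finset (M → (Fin bH → ZMod 2))) (ε : ℝ)
    (hASU : ∀ m₁ m₂ : M, m₁ ≠ m₂ → ∀ b₁ b₂ : Fin bH → ZMod 2,
      ((F.filter (fun f => f m₁ = b₁ ∧ f m₂ = b₂)).card : ℝ) ≤ ε * F.card / 2 ^ bH)
    (n : ℕ) (hn : 0 < n) (m : Fin n → M) (t' : Fin n → (Fin bH → ZMod 2))
    (mE : M) (hmE : mE ≠ m ⟨0, hn⟩) (t : Fin bH → ZMod 2) :
    (((F ×ˢ (Finset.univ : Finset (Fin n → (Fin bH → ZMod 2)))).filter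
        (fun p => t = p.1 mE + p.2 ⟨0, hn⟩ ∧
          ∀ i : Fin n, t' i = p.1 (m i) + p.2 i)).card : ℝ)
      ≤ ε * F.card := by
  have hcardB : (Fintype.card (Fin bH → ZMod 2) : ℝ) = 2 ^ bH := by simp
  calc _ ≤ (#(F.filter fun f => f mE - f (m ⟨0, hn⟩) = t - t' ⟨0, hn⟩) : ℝ) := by
        refine Nat.cast_le.mpr ?_
        -- the filters differ only in the `Decidable` instance of `∀ i : Fin n, _`
        convert card_forged_keys_le F m t' ⟨0, hn⟩ mE t
    _ ≤ Fintype.card (Fin bH → ZMod 2) * (ε * F.card / 2 ^ bH) :=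
        card_filter_sub_eq_le F mE _ _ _ (hASU mE _ hmE)
    _ = ε * F.card := by rw [hcardB]; field_simp

/-- Bound on the number of keys compatible with both the observed transcript
(m_i, t_i) and a forged message-tag pair (m_E, t) with m_E ≠ m₁, for an
ε-ASU₂ family: |S(t)| ≤ ε·|F|. -/
theorem wegman_carter_forged_keys_bound {M : Type*} [Fintype M] (bH : ℕ) (hbH : 0 < bH)
    (F : Finset (M → (Fin bH → ZMod 2))) (hF : F.Nonempty) (ε : ℝ)
    (hASU : ∀ m₁ m₂ : M, m₁ ≠ m₂ → ∀ b₁ b₂ : Fin bH → ZMod 2,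
      ((F.filter (fun f => f m₁ = b₁ ∧ f m₂ = b₂)).card : ℝ) ≤ ε * F.card / 2 ^ bH)
    (n : ℕ) (hn : 0 < n) (m : Fin n → M) (t' : Fin n → (Fin bH → ZMod 2))
    (mE : M) (hmE : mE ≠ m ⟨0, hn⟩) (t : Fin bH → ZMod 2) :
    (((F ×ˢ (Finset.univ : Finset (Fin n → (Fin bH → ZMod 2)))).filter
        (fun p => t = p.1 mE + p.2 ⟨0, hn⟩ ∧
          ∀ i : Fin n, t' i = p.1 (m i) + p.2 i)).card : ℝ)
      ≤ ε * F.card :=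
  wegman_carter_forged_keys_bound_general bH F ε hASU n hn m t' mE hmE t
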